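/- Fix q ≥ 2 and a finite set A with |A| = q, and for each n write Q = q^{q^n}. For every ε > 0 there exists N such that for every n ≥ N there exists a complete n-universal transformation f : A^m → A^m of size m = 2n + 2Q^n whose maximal sequential time satisfies st^max_f ≤ (n + 3 + ε)·Q^n. -/

import Mathlib

/-- The instruction of `A^m` induced by the `i`-th coordinate function of `f`. -/
def instr {A : Type*} {m : ℕ} (f : (Fin m → A) → Fin m → A) (i : Fin m) :
    (Fin m → A) → Fin m → A :=
  fun x => Function.update x i (f x i)

/-- Apply a list of induced instructions of `f`, first element of the list first. -/
def applyInstrs {A : Type*} {m : ℕ} (f : (Fin m → A) → Fin m → A) :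
    List (Fin m) → (Fin m → A) → Fin m → A
  | [], x => x
  | i :: l, x => applyInstrs f l (instr f i x)

/-- Projection of `A^m` onto the first `n` coordinates. -/
def pr {A : Type*} {m n : ℕ} (hmn : n ≤ m) (x : Fin m → A) : Fin n → A :=
  fun i => x (Fin.castLE hmn i)

/-- `hs` witnesses that `f` sequentially simulates the sequence `gs`: the `k`-th
element of `hs` is a nonempty list of instruction indices expressing `h^(k) ∈ S_f`,
and for each `i` the composition `h^(1) ∘ ⋯ ∘ h^(i)` simulates `g^(i)`. -/
def SeqWitness {A : Type*} {m n : ℕ} (hmn : n ≤ m)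
    (f : (Fin m → A) → Fin m → A)
    (gs : List ((Fin n → A) → Fin n → A))
    (hs : List (List (Fin m))) : Prop :=
  hs.length = gs.length ∧ (∀ l ∈ hs, l ≠ []) ∧
    ∀ (i : ℕ) (hi : i < gs.length) (x : Fin m → A),
      gs.get ⟨i, hi⟩ (pr hmn x) = pr hmn (applyInstrs f ((hs.take (i + 1)).flatten) x)

theorem aux_le (n t : ℕ) : n ≤ 2 * n + t := by omega

/-! ### Auxiliary development -/

open Classical

lemma applyInstrs_append {A : Type*} {m : ℕ} (f : (Fin m → A) → Fin m → A)
    (l1 l2 : List (Fin m)) (x : Fin m → A) :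
    applyInstrs f (l1 ++ l2) x = applyInstrs f l2 (applyInstrs f l1 x) := by
  induction l1 generalizing x with
  | nil => rfl
  | cons a l ih => simp [applyInstrs, ih]

lemma applyInstrs_cons {A : Type*} {m : ℕ} (f : (Fin m → A) → Fin m → A)
    (a : Fin m) (l : List (Fin m)) (x : Fin m → A) :
    applyInstrs f (a :: l) x = applyInstrs f l (instr f a x) := rfl

lemma upd_ne {A : Type*} {m : ℕ} (x : Fin m → A) {j j' : Fin m} (v : A)
    (h : (j' : ℕ) ≠ (j : ℕ)) : Function.update x j v j' = x j' :=
  Function.update_of_ne (fun hh => h (by rw [hh])) v x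

noncomputable section Univ

variable {A : Type*}

def dIdx (n K : ℕ) (i : Fin n) : Fin (2*n+2*K) := ⟨i.1, by have := i.2; omega⟩
def sIdx (n K : ℕ) (i : Fin n) : Fin (2*n+2*K) := ⟨n + i.1, by have := i.2; omega⟩
def pIdx (n K : ℕ) (hK : 2 ≤ K) : Fin (2*n+2*K) := ⟨2*n, by omega⟩
def tIdx (n K : ℕ) (t : Fin K) : Fin (2*n+2*K) := ⟨2*n+1+t.1, by have := t.2; omega⟩

@[simp] lemma dIdx_val (n K : ℕ) (i : Fin n) : (dIdx n K i : ℕ) = i.1 := rfl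
@[simp] lemma sIdx_val (n K : ℕ) (i : Fin n) : (sIdx n K i : ℕ) = n + i.1 := rfl
@[simp] lemma pIdx_val (n K : ℕ) (hK : 2 ≤ K) : (pIdx n K hK : ℕ) = 2*n := rfl
@[simp] lemma tIdx_val (n K : ℕ) (t : Fin K) : (tIdx n K t : ℕ) = 2*n+1+t.1 := rfl

section core

variable (a0 a1 : A) (n K : ℕ) (hK : 2 ≤ K) (E : Fin K → (Fin n → A) → Fin n → A)

/-- the set of "tokens" present in the marker block -/
def tokens (x : Fin (2*n+2*K) → A) : Finset (Fin K) :=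
  Finset.univ.filter fun t => x (tIdx n K t) ≠ a0

lemma mem_tokens {x : Fin (2*n+2*K) → A} {t : Fin K} :
    t ∈ tokens a0 n K x ↔ x (tIdx n K t) ≠ a0 := by
  simp [tokens]

lemma tokens_val_eq {x : Fin (2*n+2*K) → A} {t : Fin K}
    (h : t ∉ tokens a0 n K x) : x (tIdx n K t) = a0 := by
  have := (mem_tokens a0 n K).not.mp h
  simpa using this

/-- The universal transformation. -/
def myf (x : Fin (2*n+2*K) → A) (j : Fin (2*n+2*K)) : A :=
  if hj : (j : ℕ) < n then
    (if h : ∃ t : Fin K, tokens a0 n K x = {t} then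
       E h.choose (fun i => x (sIdx n K i)) ⟨j.1, hj⟩
     else x j)
  else if hj2 : (j : ℕ) < n + n then x (dIdx n K ⟨j.1 - n, by omega⟩)
  else if (j : ℕ) = 2*n then (if tokens a0 n K x = ∅ then a1 else a0)
  else if hj4 : (j : ℕ) < 2*n+1+K then
    (if x (tIdx n K ⟨j.1 - (2*n+1), by omega⟩) ≠ a0 then a0
     else if (x (pIdx n K hK) ≠ a0 ∧ ((tokens a0 n K x).erase ⟨j.1 - (2*n+1), by omega⟩).card ≤ 1)
       then a1 else a0)
  else x j

lemma myf_dIdx (x : Fin (2*n+2*K) → A) (i : Fin n) (t : Fin K)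
    (h : tokens a0 n K x = {t}) :
    myf a0 a1 n K hK E x (dIdx n K i) = E t (fun i' => x (sIdx n K i')) i := by
  have hlt : ((dIdx n K i : ℕ)) < n := i.2
  unfold myf
  rw [dif_pos hlt]
  have hex : ∃ s, tokens a0 n K x = {s} := ⟨t, h⟩
  rw [dif_pos hex]
  have hc : hex.choose = t := Finset.singleton_injective (hex.choose_spec.symm.trans h)
  rw [hc]
  exact congrArg _ (Fin.ext rfl)

lemma myf_sIdx (x : Fin (2*n+2*K) → A) (i : Fin n) :
    myf a0 a1 n K hK E x (sIdx n K i) = x (dIdx n K i) := by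
  have h1 : ¬ ((sIdx n K i : ℕ) < n) := by simp
  have h2 : (sIdx n K i : ℕ) < n + n := by have := i.2; simp only [sIdx_val]; omega
  unfold myf
  rw [dif_neg h1, dif_pos h2]
  exact congrArg x (Fin.ext (by simp))

lemma myf_pIdx (x : Fin (2*n+2*K) → A) :
    myf a0 a1 n K hK E x (pIdx n K hK) = (if tokens a0 n K x = ∅ then a1 else a0) := by
  have h1 : ¬ ((pIdx n K hK : ℕ) < n) := by simp only [pIdx_val]; omega
  have h2 : ¬ ((pIdx n K hK : ℕ) < n + n) := by simp only [pIdx_val]; omega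
  have h3 : (pIdx n K hK : ℕ) = 2*n := rfl
  unfold myf
  rw [dif_neg h1, dif_neg h2, if_pos h3]

lemma myf_tIdx (x : Fin (2*n+2*K) → A) (t : Fin K) :
    myf a0 a1 n K hK E x (tIdx n K t) =
      (if x (tIdx n K t) ≠ a0 then a0
       else if (x (pIdx n K hK) ≠ a0 ∧ ((tokens a0 n K x).erase t).card ≤ 1) then a1 else a0) := by
  have h1 : ¬ ((tIdx n K t : ℕ) < n) := by simp only [tIdx_val]; omega
  have h2 : ¬ ((tIdx n K t : ℕ) < n + n) := by simp only [tIdx_val]; omega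
  have h3 : ¬ ((tIdx n K t : ℕ) = 2*n) := by simp only [tIdx_val]; omega
  have h4 : ((tIdx n K t : ℕ)) < 2*n+1+K := by have := t.2; simp only [tIdx_val]; omega
  unfold myf
  rw [dif_neg h1, dif_neg h2, if_neg h3, dif_pos h4]
  have ht : (⟨(tIdx n K t : ℕ) - (2*n+1), by omega⟩ : Fin K) = t := Fin.ext (by simp)
  rw [ht]

/-! ### Effect of single instructions -/

lemma tokens_update_ne (x : Fin (2*n+2*K) → A) (j : Fin (2*n+2*K)) (v : A)
    (h : ∀ t : Fin K, (j : ℕ) ≠ 2*n+1+t.1) :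
    tokens a0 n K (Function.update x j v) = tokens a0 n K x := by
  unfold tokens
  apply Finset.filter_congr
  intro t _
  rw [upd_ne x v (by simpa using (h t).symm)]

lemma tokens_update_tIdx (x : Fin (2*n+2*K) → A) (t : Fin K) (v : A) :
    tokens a0 n K (Function.update x (tIdx n K t) v) =
      if v = a0 then (tokens a0 n K x).erase t else insert t (tokens a0 n K x) := by
  ext s
  by_cases hst : s = t
  · subst hst
    rw [mem_tokens]
    rw [Function.update_self]
    split_ifs with hv
    · simp [hv]
    · simp [hv]
  · have hne : (tIdx n K s : ℕ) ≠ (tIdx n K t : ℕ) := by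
      simp only [tIdx_val]
      have : s.1 ≠ t.1 := fun hh => hst (Fin.ext hh)
      omega
    rw [mem_tokens, upd_ne x v hne]
    split_ifs with hv
    · simp [Finset.mem_erase, hst, mem_tokens]
    · simp [Finset.mem_insert, hst, mem_tokens]


/-! ### preservation simp lemmas -/

@[simp] lemma upd_t_p (x : Fin (2*n+2*K) → A) (t : Fin K) (v : A) :
    Function.update x (tIdx n K t) v (pIdx n K hK) = x (pIdx n K hK) :=
  upd_ne x v (by simp only [pIdx_val, tIdx_val]; omega)

@[simp] lemma upd_t_s (x : Fin (2*n+2*K) → A) (t : Fin K) (v : A) (i : Fin n) :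
    Function.update x (tIdx n K t) v (sIdx n K i) = x (sIdx n K i) :=
  upd_ne x v (by have := i.2; simp only [sIdx_val, tIdx_val]; omega)

@[simp] lemma upd_t_d (x : Fin (2*n+2*K) → A) (t : Fin K) (v : A) (i : Fin n) :
    Function.update x (tIdx n K t) v (dIdx n K i) = x (dIdx n K i) :=
  upd_ne x v (by have := i.2; simp only [dIdx_val, tIdx_val]; omega)

@[simp] lemma upd_p_t (x : Fin (2*n+2*K) → A) (v : A) (t : Fin K) :
    Function.update x (pIdx n K hK) v (tIdx n K t) = x (tIdx n K t) :=
  upd_ne x v (by simp only [pIdx_val, tIdx_val]; omega)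

@[simp] lemma upd_p_s (x : Fin (2*n+2*K) → A) (v : A) (i : Fin n) :
    Function.update x (pIdx n K hK) v (sIdx n K i) = x (sIdx n K i) :=
  upd_ne x v (by have := i.2; simp only [pIdx_val, sIdx_val]; omega)

@[simp] lemma upd_p_d (x : Fin (2*n+2*K) → A) (v : A) (i : Fin n) :
    Function.update x (pIdx n K hK) v (dIdx n K i) = x (dIdx n K i) :=
  upd_ne x v (by have := i.2; simp only [pIdx_val, dIdx_val]; omega)

@[simp] lemma upd_s_t (x : Fin (2*n+2*K) → A) (i : Fin n) (v : A) (t : Fin K) :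
    Function.update x (sIdx n K i) v (tIdx n K t) = x (tIdx n K t) :=
  upd_ne x v (by have := i.2; simp only [sIdx_val, tIdx_val]; omega)

@[simp] lemma upd_s_p (x : Fin (2*n+2*K) → A) (i : Fin n) (v : A) :
    Function.update x (sIdx n K i) v (pIdx n K hK) = x (pIdx n K hK) :=
  upd_ne x v (by have := i.2; simp only [sIdx_val, pIdx_val]; omega)

@[simp] lemma upd_s_d (x : Fin (2*n+2*K) → A) (i : Fin n) (v : A) (j : Fin n) :
    Function.update x (sIdx n K i) v (dIdx n K j) = x (dIdx n K j) :=
  upd_ne x v (by have := i.2; have := j.2; simp only [sIdx_val, dIdx_val]; omega)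

@[simp] lemma upd_d_t (x : Fin (2*n+2*K) → A) (i : Fin n) (v : A) (t : Fin K) :
    Function.update x (dIdx n K i) v (tIdx n K t) = x (tIdx n K t) :=
  upd_ne x v (by have := i.2; simp only [dIdx_val, tIdx_val]; omega)

@[simp] lemma upd_d_p (x : Fin (2*n+2*K) → A) (i : Fin n) (v : A) :
    Function.update x (dIdx n K i) v (pIdx n K hK) = x (pIdx n K hK) :=
  upd_ne x v (by have := i.2; simp only [dIdx_val, pIdx_val]; omega)

@[simp] lemma upd_d_s (x : Fin (2*n+2*K) → A) (i : Fin n) (v : A) (j : Fin n) :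
    Function.update x (dIdx n K i) v (sIdx n K j) = x (sIdx n K j) :=
  upd_ne x v (by have := i.2; have := j.2; simp only [dIdx_val, sIdx_val]; omega)

lemma upd_t_t (x : Fin (2*n+2*K) → A) {t s : Fin K} (v : A) (h : s ≠ t) :
    Function.update x (tIdx n K t) v (tIdx n K s) = x (tIdx n K s) :=
  upd_ne x v (by
    simp only [tIdx_val]
    have : s.1 ≠ t.1 := fun hh => h (Fin.ext hh)
    omega)

@[simp] lemma tokens_upd_p (x : Fin (2*n+2*K) → A) (v : A) :
    tokens a0 n K (Function.update x (pIdx n K hK) v) = tokens a0 n K x :=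
  tokens_update_ne a0 n K _ _ v (by intro t; simp only [pIdx_val]; omega)

@[simp] lemma tokens_upd_s (x : Fin (2*n+2*K) → A) (i : Fin n) (v : A) :
    tokens a0 n K (Function.update x (sIdx n K i) v) = tokens a0 n K x :=
  tokens_update_ne a0 n K _ _ v (by intro t; have := i.2; simp only [sIdx_val]; omega)

@[simp] lemma tokens_upd_d (x : Fin (2*n+2*K) → A) (i : Fin n) (v : A) :
    tokens a0 n K (Function.update x (dIdx n K i) v) = tokens a0 n K x :=
  tokens_update_ne a0 n K _ _ v (by intro t; have := i.2; simp only [dIdx_val]; omega)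

lemma tokens_congr {x y : Fin (2*n+2*K) → A}
    (h : ∀ t : Fin K, x (tIdx n K t) = y (tIdx n K t)) :
    tokens a0 n K x = tokens a0 n K y := by
  unfold tokens
  exact Finset.filter_congr (fun t _ => by rw [h t])

/-! ### single instruction effects -/

lemma instr_pIdx (x : Fin (2*n+2*K) → A) :
    instr (myf a0 a1 n K hK E) (pIdx n K hK) x =
      Function.update x (pIdx n K hK) (if tokens a0 n K x = ∅ then a1 else a0) := by
  simp only [instr, myf_pIdx]

lemma instr_sIdx (x : Fin (2*n+2*K) → A) (i : Fin n) :
    instr (myf a0 a1 n K hK E) (sIdx n K i) x =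
      Function.update x (sIdx n K i) (x (dIdx n K i)) := by
  simp only [instr, myf_sIdx]

lemma instr_dIdx (x : Fin (2*n+2*K) → A) (i : Fin n) (t : Fin K)
    (hT : tokens a0 n K x = {t}) :
    instr (myf a0 a1 n K hK E) (dIdx n K i) x =
      Function.update x (dIdx n K i) (E t (fun i' => x (sIdx n K i')) i) := by
  simp only [instr]
  rw [myf_dIdx a0 a1 n K hK E x i t hT]

lemma instr_tIdx_set (x : Fin (2*n+2*K) → A) (t : Fin K)
    (hx : x (tIdx n K t) = a0) (hp : x (pIdx n K hK) ≠ a0)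
    (hc : ((tokens a0 n K x).erase t).card ≤ 1) :
    instr (myf a0 a1 n K hK E) (tIdx n K t) x = Function.update x (tIdx n K t) a1 := by
  simp only [instr]
  rw [myf_tIdx, if_neg (by simp [hx]), if_pos ⟨hp, hc⟩]

lemma instr_tIdx_clear (x : Fin (2*n+2*K) → A) (t : Fin K)
    (hx : x (tIdx n K t) ≠ a0) :
    instr (myf a0 a1 n K hK E) (tIdx n K t) x = Function.update x (tIdx n K t) a0 := by
  simp only [instr]
  rw [myf_tIdx, if_pos hx]

lemma instr_tIdx_idle (x : Fin (2*n+2*K) → A) (t : Fin K)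
    (hx : x (tIdx n K t) = a0)
    (h : ¬ (x (pIdx n K hK) ≠ a0 ∧ ((tokens a0 n K x).erase t).card ≤ 1)) :
    instr (myf a0 a1 n K hK E) (tIdx n K t) x = x := by
  simp only [instr]
  rw [myf_tIdx, if_neg (by simp [hx]), if_neg h]
  rw [show a0 = x (tIdx n K t) from hx.symm, Function.update_eq_self]

/-! ### words -/

def fin0 : Fin K := ⟨0, by omega⟩
def fin1 : Fin K := ⟨1, by omega⟩

lemma fin0_ne_fin1 : fin0 K hK ≠ fin1 K hK := by
  simp [fin0, fin1, Fin.ext_iff]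

def tList : List (Fin K) :=
  fin0 K hK :: fin1 K hK :: (List.finRange K).filter (fun t => decide (2 ≤ t.1))

lemma tList_cover (t : Fin K) : t ∈ tList K hK := by
  unfold tList
  by_cases h : 2 ≤ t.1
  · exact List.mem_cons_of_mem _ (List.mem_cons_of_mem _
      (List.mem_filter.mpr ⟨List.mem_finRange t, by simpa using h⟩))
  · rcases (by omega : t.1 = 0 ∨ t.1 = 1) with h0 | h1
    · exact List.mem_cons.mpr (Or.inl (Fin.ext (by simp [fin0, h0])))
    · exact List.mem_cons_of_mem _ (List.mem_cons.mpr (Or.inl (Fin.ext (by simp [fin1, h1]))))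

lemma tList_len : (tList K hK).length ≤ K + 2 := by
  unfold tList
  simp only [List.length_cons]
  have := List.length_filter_le (fun t : Fin K => decide (2 ≤ t.1)) (List.finRange K)
  simp only [List.length_finRange] at this
  omega

def sweepWord : List (Fin (2*n+2*K)) := (tList K hK).map (tIdx n K)
def copyWord : List (Fin (2*n+2*K)) := (List.finRange n).map (sIdx n K)
def dataWord : List (Fin (2*n+2*K)) := (List.finRange n).map (dIdx n K)
def mergeWord : List (Fin (2*n+2*K)) :=
  [pIdx n K hK, tIdx n K (fin0 K hK), tIdx n K (fin1 K hK),
   tIdx n K (fin0 K hK), tIdx n K (fin1 K hK), pIdx n K hK]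
def initWord : List (Fin (2*n+2*K)) :=
  pIdx n K hK :: (sweepWord n K hK ++ (mergeWord n K hK ++ copyWord n K))
def markWord (prev : Option (Fin K)) (t : Fin K) : List (Fin (2*n+2*K)) :=
  match prev with
  | none => [tIdx n K t]
  | some p => if p = t then [] else [tIdx n K t, tIdx n K p]
def stepWord (prev : Option (Fin K)) (t : Fin K) : List (Fin (2*n+2*K)) :=
  markWord n K prev t ++ dataWord n K


/-! ### word level lemmas -/

lemma sweep_clear (L : List (Fin K)) :
    ∀ (x : Fin (2*n+2*K) → A), x (pIdx n K hK) = a0 →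
      (∀ j : Fin (2*n+2*K), (∀ t ∈ L, (j : ℕ) ≠ (tIdx n K t : ℕ)) →
        applyInstrs (myf a0 a1 n K hK E) (L.map (tIdx n K)) x j = x j) ∧
      (∀ t ∈ L, applyInstrs (myf a0 a1 n K hK E) (L.map (tIdx n K)) x (tIdx n K t) = a0) := by
  induction L with
  | nil =>
    intro x hp
    exact ⟨fun j _ => rfl, fun t ht => absurd ht List.not_mem_nil⟩
  | cons t L ih =>
    intro x hp
    have hval : myf a0 a1 n K hK E x (tIdx n K t) = a0 := by
      rw [myf_tIdx]
      split_ifs with h1 h2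
      · rfl
      · exact absurd hp h2.1
      · rfl
    have hstep : applyInstrs (myf a0 a1 n K hK E) ((t :: L).map (tIdx n K)) x
        = applyInstrs (myf a0 a1 n K hK E) (L.map (tIdx n K))
            (Function.update x (tIdx n K t) a0) := by
      simp only [List.map_cons, applyInstrs, instr, hval]
    set x' := Function.update x (tIdx n K t) a0 with hx'
    have hp' : x' (pIdx n K hK) = a0 := by rw [hx', upd_t_p]; exact hp
    obtain ⟨ihA, ihB⟩ := ih x' hp'
    constructor
    · intro j hj
      rw [hstep, ihA j (fun t' ht' => hj t' (List.mem_cons_of_mem _ ht'))]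
      exact upd_ne x a0 (hj t (List.mem_cons_self))
    · intro s hs
      rcases List.mem_cons.mp hs with h | h
      · subst h
        by_cases hsl : s ∈ L
        · rw [hstep]; exact ihB s hsl
        · rw [hstep, ihA _ ?_]
          · exact Function.update_self _ _ _
          · intro t' ht'
            simp only [tIdx_val]
            intro hh
            exact hsl (by rw [show s = t' from Fin.ext (by omega)]; exact ht')
      · rw [hstep]; exact ihB s h

lemma sweep_frozen (L : List (Fin K))
    (hL : ∀ t ∈ L, t ≠ fin0 K hK ∧ t ≠ fin1 K hK) :
    ∀ (x : Fin (2*n+2*K) → A),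
      tokens a0 n K x = insert (fin1 K hK) {fin0 K hK} →
      applyInstrs (myf a0 a1 n K hK E) (L.map (tIdx n K)) x = x := by
  induction L with
  | nil => intro x _; rfl
  | cons t L ih =>
    intro x hT
    have hmem : t ∉ tokens a0 n K x := by
      rw [hT]
      simp only [Finset.mem_insert, Finset.mem_singleton]
      push_neg
      exact ⟨(hL t (List.mem_cons_self)).2, (hL t (List.mem_cons_self)).1⟩
    have hx : x (tIdx n K t) = a0 := tokens_val_eq a0 n K hmem
    have hcard : ((tokens a0 n K x).erase t).card = 2 := by
      rw [Finset.erase_eq_of_notMem hmem, hT]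
      rw [Finset.card_insert_of_notMem (by
        simp only [Finset.mem_singleton]
        exact fun hh => (fin0_ne_fin1 K hK) hh.symm)]
      simp
    have hfix : instr (myf a0 a1 n K hK E) (tIdx n K t) x = x := by
      apply instr_tIdx_idle a0 a1 n K hK E x t hx
      rw [hcard]
      simp
    show applyInstrs (myf a0 a1 n K hK E) (List.map (tIdx n K) (t :: L)) x = x
    rw [List.map_cons]
    show applyInstrs _ _ (instr (myf a0 a1 n K hK E) (tIdx n K t) x) = x
    rw [hfix]
    exact ih (fun t' ht' => hL t' (List.mem_cons_of_mem _ ht')) x hT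

lemma copy_spec (L : List (Fin n)) :
    ∀ (x : Fin (2*n+2*K) → A),
      (∀ j : Fin (2*n+2*K), (∀ i ∈ L, (j : ℕ) ≠ (sIdx n K i : ℕ)) →
        applyInstrs (myf a0 a1 n K hK E) (L.map (sIdx n K)) x j = x j) ∧
      (∀ i ∈ L, applyInstrs (myf a0 a1 n K hK E) (L.map (sIdx n K)) x (sIdx n K i)
          = x (dIdx n K i)) := by
  induction L with
  | nil => intro x; exact ⟨fun j _ => rfl, fun i hi => absurd hi List.not_mem_nil⟩
  | cons i L ih =>
    intro x
    have hstep : applyInstrs (myf a0 a1 n K hK E) ((i :: L).map (sIdx n K)) x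
        = applyInstrs (myf a0 a1 n K hK E) (L.map (sIdx n K))
            (Function.update x (sIdx n K i) (x (dIdx n K i))) := by
      simp only [List.map_cons, applyInstrs, instr, myf_sIdx]
    set x' := Function.update x (sIdx n K i) (x (dIdx n K i)) with hx'
    obtain ⟨ihA, ihB⟩ := ih x'
    constructor
    · intro j hj
      rw [hstep, ihA j (fun i' hi' => hj i' (List.mem_cons_of_mem _ hi'))]
      exact upd_ne x _ (hj i (List.mem_cons_self))
    · intro s hs
      rcases List.mem_cons.mp hs with h | h
      · subst h
        by_cases hsl : s ∈ L
        · rw [hstep, ihB s hsl, hx', upd_s_d]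
        · rw [hstep, ihA _ ?_]
          · exact Function.update_self _ _ _
          · intro i' hi'
            simp only [sIdx_val]
            intro hh
            exact hsl (by rw [show s = i' from Fin.ext (by omega)]; exact hi')
      · rw [hstep, ihB s h, hx', upd_s_d]

lemma data_spec (L : List (Fin n)) (t : Fin K) :
    ∀ (x : Fin (2*n+2*K) → A), tokens a0 n K x = {t} →
      (∀ j : Fin (2*n+2*K), (∀ i ∈ L, (j : ℕ) ≠ (dIdx n K i : ℕ)) →
        applyInstrs (myf a0 a1 n K hK E) (L.map (dIdx n K)) x j = x j) ∧
      (∀ i ∈ L, applyInstrs (myf a0 a1 n K hK E) (L.map (dIdx n K)) x (dIdx n K i)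
          = E t (fun i' => x (sIdx n K i')) i) := by
  induction L with
  | nil => intro x _; exact ⟨fun j _ => rfl, fun i hi => absurd hi List.not_mem_nil⟩
  | cons i L ih =>
    intro x hT
    have hstep : applyInstrs (myf a0 a1 n K hK E) ((i :: L).map (dIdx n K)) x
        = applyInstrs (myf a0 a1 n K hK E) (L.map (dIdx n K))
            (Function.update x (dIdx n K i) (E t (fun i' => x (sIdx n K i')) i)) := by
      simp only [List.map_cons, applyInstrs]
      rw [instr_dIdx a0 a1 n K hK E x i t hT]
    set x' := Function.update x (dIdx n K i) (E t (fun i' => x (sIdx n K i')) i) with hx'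
    have hT' : tokens a0 n K x' = {t} := by rw [hx', tokens_upd_d]; exact hT
    have hS' : (fun i' => x' (sIdx n K i')) = (fun i' => x (sIdx n K i')) := by
      funext i'; rw [hx', upd_d_s]
    obtain ⟨ihA, ihB⟩ := ih x' hT'
    constructor
    · intro j hj
      rw [hstep, ihA j (fun i' hi' => hj i' (List.mem_cons_of_mem _ hi'))]
      exact upd_ne x _ (hj i (List.mem_cons_self))
    · intro s hs
      rcases List.mem_cons.mp hs with h | h
      · subst h
        by_cases hsl : s ∈ L
        · rw [hstep, ihB s hsl, hS']
        · rw [hstep, ihA _ ?_]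
          · rw [hx', Function.update_self]
          · intro i' hi'
            simp only [dIdx_val]
            intro hh
            exact hsl (by rw [show s = i' from Fin.ext (by omega)]; exact hi')
      · rw [hstep, ihB s h, hS']


/-! ### the initialisation word -/

lemma init_spec (ha : a1 ≠ a0) (x : Fin (2*n+2*K) → A) :
    (∀ i, applyInstrs (myf a0 a1 n K hK E) (initWord n K hK) x (sIdx n K i) = x (dIdx n K i)) ∧
    applyInstrs (myf a0 a1 n K hK E) (initWord n K hK) x (pIdx n K hK) = a1 ∧
    tokens a0 n K (applyInstrs (myf a0 a1 n K hK E) (initWord n K hK) x) = ∅ ∧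
    (∀ i, applyInstrs (myf a0 a1 n K hK E) (initWord n K hK) x (dIdx n K i) = x (dIdx n K i)) := by
  have h01 : fin0 K hK ≠ fin1 K hK := fin0_ne_fin1 K hK
  have h10 : fin1 K hK ≠ fin0 K hK := Ne.symm h01
  have hpair_card : (insert (fin1 K hK) ({fin0 K hK} : Finset (Fin K))).card = 2 := by
    rw [Finset.card_insert_of_notMem (by simpa using h10)]
    simp
  have hpair_erase : (insert (fin1 K hK) ({fin0 K hK} : Finset (Fin K))).erase (fin0 K hK)
      = {fin1 K hK} := by
    rw [Finset.erase_insert_of_ne h10, Finset.erase_singleton]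
    rfl
  -- decompose the word
  have hsplit : initWord n K hK
      = (pIdx n K hK :: (sweepWord n K hK ++ mergeWord n K hK)) ++ copyWord n K := by
    simp [initWord, List.append_assoc]
  -- main part: after `pIdx :: sweep ++ merge` the state is parked-clean
  set F := myf a0 a1 n K hK E with hF
  set W := applyInstrs F (pIdx n K hK :: (sweepWord n K hK ++ mergeWord n K hK)) x with hW
  have hWmain : tokens a0 n K W = ∅ ∧ W (pIdx n K hK) = a1 ∧
      (∀ i, W (dIdx n K i) = x (dIdx n K i)) := by
    rw [hW, applyInstrs_cons, applyInstrs_append]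
    by_cases h0 : tokens a0 n K x = ∅
    -- CASE A : the marker block of x is clean
    · rw [instr_pIdx, if_pos h0]
      set y0 := Function.update x (pIdx n K hK) a1 with hy0
      have hty0 : tokens a0 n K y0 = ∅ := by rw [hy0, tokens_upd_p]; exact h0
      have hpy0 : y0 (pIdx n K hK) = a1 := Function.update_self _ _ _
      -- sweep: sets tokens at fin0, fin1, freezes elsewhere
      have hy1 : instr F (tIdx n K (fin0 K hK)) y0
          = Function.update y0 (tIdx n K (fin0 K hK)) a1 := by
        apply instr_tIdx_set a0 a1 n K hK E y0 _ ?_ (by rw [hpy0]; exact ha) ?_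
        · exact tokens_val_eq a0 n K (by rw [hty0]; exact Finset.notMem_empty _)
        · rw [hty0]; simp
      set y1 := Function.update y0 (tIdx n K (fin0 K hK)) a1 with hy1d
      have hty1 : tokens a0 n K y1 = {fin0 K hK} := by
        rw [hy1d, tokens_update_tIdx, if_neg ha, hty0]
        rfl
      have hpy1 : y1 (pIdx n K hK) = a1 := by rw [hy1d, upd_t_p]; exact hpy0
      have hy2 : instr F (tIdx n K (fin1 K hK)) y1
          = Function.update y1 (tIdx n K (fin1 K hK)) a1 := by
        apply instr_tIdx_set a0 a1 n K hK E y1 _ ?_ (by rw [hpy1]; exact ha) ?_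
        · exact tokens_val_eq a0 n K (by rw [hty1]; simpa using h10)
        · rw [hty1, Finset.erase_eq_of_notMem (by simpa using h10)]
          simp
      set y2 := Function.update y1 (tIdx n K (fin1 K hK)) a1 with hy2d
      have hty2 : tokens a0 n K y2 = insert (fin1 K hK) {fin0 K hK} := by
        rw [hy2d, tokens_update_tIdx, if_neg ha, hty1]
      have hpy2 : y2 (pIdx n K hK) = a1 := by rw [hy2d, upd_t_p]; exact hpy1
      have hsweep : applyInstrs F (sweepWord n K hK) y0 = y2 := by
        show applyInstrs F ((tList K hK).map (tIdx n K)) y0 = y2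
        rw [show tList K hK = fin0 K hK :: fin1 K hK ::
              (List.finRange K).filter (fun t => decide (2 ≤ t.1)) from rfl]
        rw [List.map_cons, List.map_cons, applyInstrs_cons, hy1, applyInstrs_cons, hy2]
        apply sweep_frozen a0 a1 n K hK E _ ?_ y2 hty2
        · intro t ht
          have := List.mem_filter.mp ht
          have h2 : 2 ≤ t.1 := by simpa using this.2
          constructor
          · intro hh; rw [hh] at h2; simp [fin0] at h2
          · intro hh; rw [hh] at h2; simp [fin1] at h2
      rw [hsweep]
      -- merge : p := 0, clear fin0, clear fin1, idle, idle, p := 1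
      have hz1 : instr F (pIdx n K hK) y2 = Function.update y2 (pIdx n K hK) a0 := by
        rw [instr_pIdx, if_neg (by rw [hty2]; exact Finset.insert_ne_empty _ _)]
      set z1 := Function.update y2 (pIdx n K hK) a0 with hz1d
      have htz1 : tokens a0 n K z1 = insert (fin1 K hK) {fin0 K hK} := by
        rw [hz1d, tokens_upd_p]; exact hty2
      have hpz1 : z1 (pIdx n K hK) = a0 := Function.update_self _ _ _
      have hz2 : instr F (tIdx n K (fin0 K hK)) z1
          = Function.update z1 (tIdx n K (fin0 K hK)) a0 := by
        apply instr_tIdx_clear a0 a1 n K hK E z1 _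
        exact (mem_tokens a0 n K).mp (by rw [htz1]; exact Finset.mem_insert_of_mem (Finset.mem_singleton_self _))
      set z2 := Function.update z1 (tIdx n K (fin0 K hK)) a0 with hz2d
      have htz2 : tokens a0 n K z2 = {fin1 K hK} := by
        rw [hz2d, tokens_update_tIdx, if_pos rfl, htz1, hpair_erase]
      have hpz2 : z2 (pIdx n K hK) = a0 := by rw [hz2d, upd_t_p]; exact hpz1
      have hz3 : instr F (tIdx n K (fin1 K hK)) z2
          = Function.update z2 (tIdx n K (fin1 K hK)) a0 := by
        apply instr_tIdx_clear a0 a1 n K hK E z2 _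
        exact (mem_tokens a0 n K).mp (by rw [htz2]; exact Finset.mem_singleton_self _)
      set z3 := Function.update z2 (tIdx n K (fin1 K hK)) a0 with hz3d
      have htz3 : tokens a0 n K z3 = ∅ := by
        rw [hz3d, tokens_update_tIdx, if_pos rfl, htz2, Finset.erase_singleton]
      have hpz3 : z3 (pIdx n K hK) = a0 := by rw [hz3d, upd_t_p]; exact hpz2
      have hz4 : instr F (tIdx n K (fin0 K hK)) z3 = z3 := by
        apply instr_tIdx_idle a0 a1 n K hK E z3 _
          (tokens_val_eq a0 n K (by rw [htz3]; exact Finset.notMem_empty _))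
        rw [hpz3]; simp
      have hz5 : instr F (tIdx n K (fin1 K hK)) z3 = z3 := by
        apply instr_tIdx_idle a0 a1 n K hK E z3 _
          (tokens_val_eq a0 n K (by rw [htz3]; exact Finset.notMem_empty _))
        rw [hpz3]; simp
      have hz6 : instr F (pIdx n K hK) z3 = Function.update z3 (pIdx n K hK) a1 := by
        rw [instr_pIdx, if_pos htz3]
      have hmerge : applyInstrs F (mergeWord n K hK) y2
          = Function.update z3 (pIdx n K hK) a1 := by
        show applyInstrs F (pIdx n K hK :: (tIdx n K (fin0 K hK) :: tIdx n K (fin1 K hK) ::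
          tIdx n K (fin0 K hK) :: tIdx n K (fin1 K hK) :: [pIdx n K hK])) y2 = _
        rw [applyInstrs_cons, hz1, applyInstrs_cons, hz2,
          applyInstrs_cons, hz3, applyInstrs_cons, hz4, applyInstrs_cons, hz5,
          applyInstrs_cons, hz6]
        rfl
      rw [hmerge]
      refine ⟨?_, ?_, ?_⟩
      · rw [tokens_upd_p]; exact htz3
      · exact Function.update_self _ _ _
      · intro i
        rw [upd_p_d, hz3d, upd_t_d, hz2d, upd_t_d, hz1d, upd_p_d, hy2d, upd_t_d,
          hy1d, upd_t_d, hy0, upd_p_d]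
    -- CASE B : the marker block of x is dirty
    · rw [instr_pIdx, if_neg h0]
      set y0 := Function.update x (pIdx n K hK) a0 with hy0
      have hpy0 : y0 (pIdx n K hK) = a0 := Function.update_self _ _ _
      obtain ⟨hcl1, hcl2⟩ := sweep_clear a0 a1 n K hK E (tList K hK) y0 hpy0
      set z := applyInstrs F (sweepWord n K hK) y0 with hz
      have hzt : ∀ t : Fin K, z (tIdx n K t) = a0 := fun t => hcl2 t (tList_cover K hK t)
      have htz : tokens a0 n K z = ∅ := by
        ext t
        simp [mem_tokens, hzt t]
      have hpz : z (pIdx n K hK) = a0 := by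
        rw [hz]
        show applyInstrs F ((tList K hK).map (tIdx n K)) y0 (pIdx n K hK) = a0
        rw [hcl1 _ (fun t _ => by simp only [pIdx_val, tIdx_val]; omega)]
        exact hpy0
      have hdz : ∀ i, z (dIdx n K i) = x (dIdx n K i) := by
        intro i
        rw [hz]
        show applyInstrs F ((tList K hK).map (tIdx n K)) y0 (dIdx n K i) = _
        rw [hcl1 _ (fun t _ => by have := i.2; simp only [dIdx_val, tIdx_val]; omega)]
        rw [hy0, upd_p_d]
      -- merge from (tokens ∅, p = a0)
      have hw1 : instr F (pIdx n K hK) z = Function.update z (pIdx n K hK) a1 := by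
        rw [instr_pIdx, if_pos htz]
      set w1 := Function.update z (pIdx n K hK) a1 with hw1d
      have htw1 : tokens a0 n K w1 = ∅ := by rw [hw1d, tokens_upd_p]; exact htz
      have hpw1 : w1 (pIdx n K hK) = a1 := Function.update_self _ _ _
      have hw2 : instr F (tIdx n K (fin0 K hK)) w1
          = Function.update w1 (tIdx n K (fin0 K hK)) a1 := by
        apply instr_tIdx_set a0 a1 n K hK E w1 _ ?_ (by rw [hpw1]; exact ha) ?_
        · exact tokens_val_eq a0 n K (by rw [htw1]; exact Finset.notMem_empty _)
        · rw [htw1]; simp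
      set w2 := Function.update w1 (tIdx n K (fin0 K hK)) a1 with hw2d
      have htw2 : tokens a0 n K w2 = {fin0 K hK} := by
        rw [hw2d, tokens_update_tIdx, if_neg ha, htw1]
        rfl
      have hpw2 : w2 (pIdx n K hK) = a1 := by rw [hw2d, upd_t_p]; exact hpw1
      have hw3 : instr F (tIdx n K (fin1 K hK)) w2
          = Function.update w2 (tIdx n K (fin1 K hK)) a1 := by
        apply instr_tIdx_set a0 a1 n K hK E w2 _ ?_ (by rw [hpw2]; exact ha) ?_
        · exact tokens_val_eq a0 n K (by rw [htw2]; simpa using h10)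
        · rw [htw2, Finset.erase_eq_of_notMem (by simpa using h10)]
          simp
      set w3 := Function.update w2 (tIdx n K (fin1 K hK)) a1 with hw3d
      have htw3 : tokens a0 n K w3 = insert (fin1 K hK) {fin0 K hK} := by
        rw [hw3d, tokens_update_tIdx, if_neg ha, htw2]
      have hpw3 : w3 (pIdx n K hK) = a1 := by rw [hw3d, upd_t_p]; exact hpw2
      have hw4 : instr F (tIdx n K (fin0 K hK)) w3
          = Function.update w3 (tIdx n K (fin0 K hK)) a0 := by
        apply instr_tIdx_clear a0 a1 n K hK E w3 _
        exact (mem_tokens a0 n K).mp (by rw [htw3]; exact Finset.mem_insert_of_mem (Finset.mem_singleton_self _))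
      set w4 := Function.update w3 (tIdx n K (fin0 K hK)) a0 with hw4d
      have htw4 : tokens a0 n K w4 = {fin1 K hK} := by
        rw [hw4d, tokens_update_tIdx, if_pos rfl, htw3, hpair_erase]
      have hw5 : instr F (tIdx n K (fin1 K hK)) w4
          = Function.update w4 (tIdx n K (fin1 K hK)) a0 := by
        apply instr_tIdx_clear a0 a1 n K hK E w4 _
        exact (mem_tokens a0 n K).mp (by rw [htw4]; exact Finset.mem_singleton_self _)
      set w5 := Function.update w4 (tIdx n K (fin1 K hK)) a0 with hw5d
      have htw5 : tokens a0 n K w5 = ∅ := by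
        rw [hw5d, tokens_update_tIdx, if_pos rfl, htw4, Finset.erase_singleton]
      have hw6 : instr F (pIdx n K hK) w5 = Function.update w5 (pIdx n K hK) a1 := by
        rw [instr_pIdx, if_pos htw5]
      have hmerge : applyInstrs F (mergeWord n K hK) z
          = Function.update w5 (pIdx n K hK) a1 := by
        show applyInstrs F (pIdx n K hK :: (tIdx n K (fin0 K hK) :: tIdx n K (fin1 K hK) ::
          tIdx n K (fin0 K hK) :: tIdx n K (fin1 K hK) :: [pIdx n K hK])) z = _
        rw [applyInstrs_cons, hw1, applyInstrs_cons, hw2,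
          applyInstrs_cons, hw3, applyInstrs_cons, hw4,
          applyInstrs_cons, hw5, applyInstrs_cons, hw6]
        rfl
      rw [hmerge]
      refine ⟨?_, ?_, ?_⟩
      · rw [tokens_upd_p]; exact htw5
      · exact Function.update_self _ _ _
      · intro i
        rw [upd_p_d, hw5d, upd_t_d, hw4d, upd_t_d, hw3d, upd_t_d, hw2d, upd_t_d,
          hw1d, upd_p_d]
        exact hdz i
  -- now apply the copy word
  obtain ⟨hWt, hWp, hWd⟩ := hWmain
  have hfin : applyInstrs F (initWord n K hK) x = applyInstrs F (copyWord n K) W := by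
    rw [hsplit, applyInstrs_append, hW]
  obtain ⟨hcpA, hcpB⟩ := copy_spec a0 a1 n K hK E (List.finRange n) W
  refine ⟨?_, ?_, ?_, ?_⟩
  · intro i
    rw [hfin]
    show applyInstrs F ((List.finRange n).map (sIdx n K)) W (sIdx n K i) = _
    rw [hcpB i (List.mem_finRange i)]
    exact hWd i
  · rw [hfin]
    show applyInstrs F ((List.finRange n).map (sIdx n K)) W (pIdx n K hK) = a1
    rw [hcpA _ (fun i _ => by have := i.2; simp only [pIdx_val, sIdx_val]; omega)]
    exact hWp
  · rw [hfin]
    show tokens a0 n K (applyInstrs F ((List.finRange n).map (sIdx n K)) W) = ∅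
    rw [tokens_congr a0 n K (fun t => hcpA _ (fun i _ => by
      have := i.2; simp only [tIdx_val, sIdx_val]; omega))]
    exact hWt
  · intro i
    rw [hfin]
    show applyInstrs F ((List.finRange n).map (sIdx n K)) W (dIdx n K i) = _
    rw [hcpA _ (fun i' _ => by have := i'.2; have := i.2; simp only [dIdx_val, sIdx_val]; omega)]
    exact hWd i


/-! ### a single simulation step -/

lemma step_spec (ha : a1 ≠ a0) (x0 y : Fin (2*n+2*K) → A) (prev : Option (Fin K)) (t : Fin K)
    (hS : ∀ i, y (sIdx n K i) = x0 (dIdx n K i)) (hp : y (pIdx n K hK) = a1)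
    (hT : tokens a0 n K y = (match prev with | none => ∅ | some p => {p})) :
    (∀ i, applyInstrs (myf a0 a1 n K hK E) (stepWord n K prev t) y (sIdx n K i)
        = x0 (dIdx n K i)) ∧
    applyInstrs (myf a0 a1 n K hK E) (stepWord n K prev t) y (pIdx n K hK) = a1 ∧
    tokens a0 n K (applyInstrs (myf a0 a1 n K hK E) (stepWord n K prev t) y) = {t} ∧
    (∀ i, applyInstrs (myf a0 a1 n K hK E) (stepWord n K prev t) y (dIdx n K i)
        = E t (fun i' => x0 (dIdx n K i')) i) := by
  set F := myf a0 a1 n K hK E with hF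
  have hmark : (∀ i, applyInstrs F (markWord n K prev t) y (sIdx n K i) = x0 (dIdx n K i)) ∧
      applyInstrs F (markWord n K prev t) y (pIdx n K hK) = a1 ∧
      tokens a0 n K (applyInstrs F (markWord n K prev t) y) = {t} := by
    match prev with
    | none =>
      have hset : instr F (tIdx n K t) y = Function.update y (tIdx n K t) a1 := by
        apply instr_tIdx_set a0 a1 n K hK E y t ?_ (by rw [hp]; exact ha) ?_
        · exact tokens_val_eq a0 n K (by rw [hT]; exact Finset.notMem_empty _)
        · rw [hT]; simp
      have e : applyInstrs F (markWord n K none t) y = Function.update y (tIdx n K t) a1 := by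
        show applyInstrs F [tIdx n K t] y = _
        rw [applyInstrs_cons, hset]
        rfl
      rw [e]
      refine ⟨fun i => by rw [upd_t_s]; exact hS i, by rw [upd_t_p]; exact hp, ?_⟩
      rw [tokens_update_tIdx, if_neg ha, hT]
      rfl
    | some p =>
      by_cases hpt : p = t
      · subst hpt
        have e : markWord n K (some p) p = [] := by simp [markWord]
        rw [e]
        exact ⟨fun i => hS i, hp, hT⟩
      · have htp : t ≠ p := fun h => hpt h.symm
        have hnm : t ∉ ({p} : Finset (Fin K)) := by simpa using htp
        have e : markWord n K (some p) t = [tIdx n K t, tIdx n K p] := by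
          simp [markWord, hpt]
        rw [e]
        have hset : instr F (tIdx n K t) y = Function.update y (tIdx n K t) a1 := by
          apply instr_tIdx_set a0 a1 n K hK E y t ?_ (by rw [hp]; exact ha) ?_
          · exact tokens_val_eq a0 n K (by rw [hT]; exact hnm)
          · rw [hT, Finset.erase_eq_of_notMem hnm]
            simp
        set z1 := Function.update y (tIdx n K t) a1 with hz1d
        have htz1 : tokens a0 n K z1 = insert t {p} := by
          rw [hz1d, tokens_update_tIdx, if_neg ha, hT]
        have hclr : instr F (tIdx n K p) z1 = Function.update z1 (tIdx n K p) a0 := by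
          apply instr_tIdx_clear a0 a1 n K hK E z1 p
          exact (mem_tokens a0 n K).mp (by rw [htz1]; exact Finset.mem_insert_of_mem (Finset.mem_singleton_self _))
        have e2 : applyInstrs F [tIdx n K t, tIdx n K p] y
            = Function.update z1 (tIdx n K p) a0 := by
          rw [applyInstrs_cons, hset, applyInstrs_cons, hclr]
          rfl
        rw [e2]
        refine ⟨fun i => ?_, ?_, ?_⟩
        · rw [upd_t_s, hz1d, upd_t_s]; exact hS i
        · rw [upd_t_p, hz1d, upd_t_p]; exact hp
        · rw [tokens_update_tIdx, if_pos rfl, htz1,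
            Finset.erase_insert_of_ne htp, Finset.erase_singleton]
          rfl
  obtain ⟨hmS, hmp, hmT⟩ := hmark
  have hsw : applyInstrs F (stepWord n K prev t) y
      = applyInstrs F (dataWord n K) (applyInstrs F (markWord n K prev t) y) := by
    rw [stepWord, applyInstrs_append]
  set y1 := applyInstrs F (markWord n K prev t) y with hy1
  obtain ⟨hdA, hdB⟩ := data_spec a0 a1 n K hK E (List.finRange n) t y1 hmT
  refine ⟨?_, ?_, ?_, ?_⟩
  · intro i
    rw [hsw]
    show applyInstrs F ((List.finRange n).map (dIdx n K)) y1 (sIdx n K i) = _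
    rw [hdA _ (fun i' _ => by have := i.2; have := i'.2; simp only [sIdx_val, dIdx_val]; omega)]
    exact hmS i
  · rw [hsw]
    show applyInstrs F ((List.finRange n).map (dIdx n K)) y1 (pIdx n K hK) = a1
    rw [hdA _ (fun i' _ => by have := i'.2; simp only [pIdx_val, dIdx_val]; omega)]
    exact hmp
  · rw [hsw]
    show tokens a0 n K (applyInstrs F ((List.finRange n).map (dIdx n K)) y1) = {t}
    rw [tokens_congr a0 n K (fun s => hdA _ (fun i' _ => by
      have := i'.2; simp only [tIdx_val, dIdx_val]; omega))]
    exact hmT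
  · intro i
    rw [hsw]
    show applyInstrs F ((List.finRange n).map (dIdx n K)) y1 (dIdx n K i) = _
    rw [hdB i (List.mem_finRange i)]
    congr 1
    funext i'
    exact hmS i'


/-! ### the full witness -/

variable (idx : ((Fin n → A) → Fin n → A) → Fin K)

def chainW : Fin K → List ((Fin n → A) → Fin n → A) → List (List (Fin (2*n+2*K)))
  | _, [] => []
  | p, g :: rest => stepWord n K (some p) (idx g) :: chainW (idx g) rest

def mkHs : List ((Fin n → A) → Fin n → A) → List (List (Fin (2*n+2*K)))
  | [] => []
  | g :: rest => (initWord n K hK ++ stepWord n K none (idx g)) :: chainW n K idx (idx g) rest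

lemma chainW_length : ∀ (l : List ((Fin n → A) → Fin n → A)) (p : Fin K),
    (chainW n K idx p l).length = l.length := by
  intro l
  induction l with
  | nil => intro p; rfl
  | cons g rest ih => intro p; simp [chainW, ih]

lemma chainW_mem : ∀ (l : List ((Fin n → A) → Fin n → A)) (p : Fin K)
    (w : List (Fin (2*n+2*K))), w ∈ chainW n K idx p l →
    ∃ p' t', w = stepWord n K (some p') t' := by
  intro l
  induction l with
  | nil => intro p w hw; simp [chainW] at hw
  | cons g rest ih =>
    intro p w hw
    rcases List.mem_cons.mp hw with h | h
    · exact ⟨p, idx g, h⟩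
    · exact ih (idx g) w h

lemma dataWord_length : (dataWord n K).length = n := by simp [dataWord]

lemma stepWord_length_le (prev : Option (Fin K)) (t : Fin K) :
    (stepWord n K prev t).length ≤ 2 + n := by
  have : (markWord n K prev t).length ≤ 2 := by
    match prev with
    | none => simp [markWord]
    | some p =>
      by_cases h : p = t <;> simp [markWord, h]
  simp only [stepWord, List.length_append, dataWord_length]
  omega

lemma stepWord_length_pos (hn : 1 ≤ n) (prev : Option (Fin K)) (t : Fin K) :
    0 < (stepWord n K prev t).length := by
  simp only [stepWord, List.length_append, dataWord_length]
  omega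

lemma chainW_flatten_le : ∀ (l : List ((Fin n → A) → Fin n → A)) (p : Fin K),
    (chainW n K idx p l).flatten.length ≤ l.length * (n + 2) := by
  intro l
  induction l with
  | nil => intro p; simp [chainW]
  | cons g rest ih =>
    intro p
    have h1 := stepWord_length_le n K (some p) (idx g)
    have h2 := ih (idx g)
    have h3 : (rest.length + 1) * (n + 2) = rest.length * (n + 2) + (n + 2) := by ring
    simp only [chainW, List.flatten_cons, List.length_append, List.length_cons]
    omega

lemma initWord_length_le : (initWord n K hK).length ≤ K + n + 9 := by
  have h1 := tList_len K hK
  simp only [initWord, sweepWord, copyWord, mergeWord, List.length_cons, List.length_append,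
    List.length_map, List.length_finRange, List.length_nil]
  omega

lemma mkHs_flatten_le (gs : List ((Fin n → A) → Fin n → A)) :
    (mkHs n K hK idx gs).flatten.length ≤ gs.length * (n + 2) + (K + 2*n + 10) := by
  cases gs with
  | nil => simp [mkHs]
  | cons g rest =>
    have h1 := initWord_length_le n K hK
    have h2 := stepWord_length_le n K none (idx g)
    have h3 := chainW_flatten_le n K idx rest (idx g)
    have h4 : (rest.length + 1) * (n + 2) = rest.length * (n + 2) + (n + 2) := by ring
    simp only [mkHs, List.flatten_cons, List.length_append, List.length_cons]
    omega

lemma chain_pr (ha : a1 ≠ a0) (hidx : ∀ g, E (idx g) = g) :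
    ∀ (rest : List ((Fin n → A) → Fin n → A)) (p : Fin K) (x0 y : Fin (2*n+2*K) → A),
      (∀ i, y (sIdx n K i) = x0 (dIdx n K i)) → y (pIdx n K hK) = a1 →
      tokens a0 n K y = {p} →
      ∀ (i : ℕ) (hi : i < rest.length) (j : Fin n),
        applyInstrs (myf a0 a1 n K hK E) (((chainW n K idx p rest).take (i+1)).flatten) y
            (dIdx n K j)
          = rest.get ⟨i, hi⟩ (fun j' => x0 (dIdx n K j')) j := by
  intro rest
  induction rest with
  | nil => intro p x0 y _ _ _ i hi; exact absurd hi (by simp)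
  | cons g rest ih =>
    intro p x0 y hS hp hT i hi j
    obtain ⟨sS, sp, sT, sD⟩ := step_spec a0 a1 n K hK E ha x0 y (some p) (idx g) hS hp hT
    match i with
    | 0 =>
      have e : ((chainW n K idx p (g :: rest)).take 1).flatten
          = stepWord n K (some p) (idx g) := by
        show ((stepWord n K (some p) (idx g) :: chainW n K idx (idx g) rest).take 1).flatten = _
        simp
      rw [e]
      show applyInstrs _ _ y (dIdx n K j) = g (fun j' => x0 (dIdx n K j')) j
      rw [sD j, hidx g]
    | Nat.succ i' =>
      have e : ((chainW n K idx p (g :: rest)).take (i'+1+1)).flatten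
          = stepWord n K (some p) (idx g)
            ++ ((chainW n K idx (idx g) rest).take (i'+1)).flatten := by
        show ((stepWord n K (some p) (idx g) :: chainW n K idx (idx g) rest).take (i'+2)).flatten
          = _
        rw [List.take_succ_cons, List.flatten_cons]
      rw [e, applyInstrs_append]
      have hi' : i' < rest.length := by simpa using hi
      rw [ih (idx g) x0 (applyInstrs _ (stepWord n K (some p) (idx g)) y) sS sp sT i' hi' j]
      rfl

lemma mkHs_witness (ha : a1 ≠ a0) (hn : 1 ≤ n) (hmn : n ≤ 2*n+2*K)
    (hidx : ∀ g, E (idx g) = g) (gs : List ((Fin n → A) → Fin n → A)) :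
    SeqWitness hmn (myf a0 a1 n K hK E) gs (mkHs n K hK idx gs) := by
  refine ⟨?_, ?_, ?_⟩
  · cases gs with
    | nil => rfl
    | cons g rest => simp [mkHs, chainW_length]
  · intro l hl
    cases gs with
    | nil => simp [mkHs] at hl
    | cons g rest =>
      rcases List.mem_cons.mp hl with h | h
      · subst h
        simp [initWord]
      · obtain ⟨p', t', rfl⟩ := chainW_mem n K idx rest (idx g) l h
        exact List.ne_nil_of_length_pos (stepWord_length_pos n K hn (some p') t')
  · intro i hi x
    cases gs with
    | nil => exact absurd hi (by simp)
    | cons g rest =>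
      obtain ⟨iS, ip, iT, iD⟩ := init_spec a0 a1 n K hK E ha x
      obtain ⟨sS, sp, sT, sD⟩ := step_spec a0 a1 n K hK E ha x
        (applyInstrs (myf a0 a1 n K hK E) (initWord n K hK) x) none (idx g) iS ip iT
      have hfirst : applyInstrs (myf a0 a1 n K hK E)
            (initWord n K hK ++ stepWord n K none (idx g)) x
          = applyInstrs (myf a0 a1 n K hK E) (stepWord n K none (idx g))
              (applyInstrs (myf a0 a1 n K hK E) (initWord n K hK) x) :=
        applyInstrs_append _ _ _ _
      match i with
      | 0 =>
        have e : ((mkHs n K hK idx (g :: rest)).take 1).flatten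
            = initWord n K hK ++ stepWord n K none (idx g) := by
          show (((initWord n K hK ++ stepWord n K none (idx g))
            :: chainW n K idx (idx g) rest).take 1).flatten = _
          simp
        rw [e, hfirst]
        funext j
        show g (pr hmn x) j = applyInstrs _ (stepWord n K none (idx g)) _ (dIdx n K j)
        rw [sD j, hidx g]
        rfl
      | Nat.succ i' =>
        have e : ((mkHs n K hK idx (g :: rest)).take (i'+1+1)).flatten
            = (initWord n K hK ++ stepWord n K none (idx g))
              ++ ((chainW n K idx (idx g) rest).take (i'+1)).flatten := by
          show (((initWord n K hK ++ stepWord n K none (idx g))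
            :: chainW n K idx (idx g) rest).take (i'+2)).flatten = _
          rw [List.take_succ_cons, List.flatten_cons]
        rw [e, applyInstrs_append, hfirst]
        have hi' : i' < rest.length := by simpa using hi
        funext j
        exact (chain_pr a0 a1 n K hK E idx ha hidx rest (idx g) x _ sS sp sT i' hi' j).symm

end core

end Univ

/-! ### numerics -/

lemma numeric_aux (q k₀ n : ℕ) (hq : 2 ≤ q) (hn : k₀ + 9 ≤ n) :
    (2*n + 10) * k₀ ≤ (q ^ q ^ n) ^ n := by
  have hstep2 : 2*n + 10 + k₀ ≤ 2 ^ n := by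
    obtain ⟨d, rfl⟩ : ∃ d, n = k₀ + 9 + d := ⟨n - (k₀+9), by omega⟩
    have ha : k₀ < 2 ^ k₀ := Nat.lt_two_pow_self (n := k₀)
    have hb : d < 2 ^ d := Nat.lt_two_pow_self (n := d)
    have e : 2 ^ (k₀+9+d) = 2^k₀ * 2^d * 512 := by
      rw [pow_add, pow_add]; ring
    have h2 : (k₀+1) * (d+1) * 512 ≤ 2^k₀ * 2^d * 512 :=
      Nat.mul_le_mul_right _ (Nat.mul_le_mul (by omega) (by omega))
    rw [e]
    nlinarith [h2]
  calc (2*n+10) * k₀ ≤ 2^(2*n+10) * 2^k₀ :=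
        Nat.mul_le_mul (le_of_lt Nat.lt_two_pow_self) (le_of_lt Nat.lt_two_pow_self)
    _ = 2^(2*n+10+k₀) := (pow_add 2 _ _).symm
    _ ≤ 2^(2^n) := Nat.pow_le_pow_right (by norm_num) hstep2
    _ ≤ 2^(q^n) := Nat.pow_le_pow_right (by norm_num) (Nat.pow_le_pow_left hq n)
    _ ≤ q^(q^n) := Nat.pow_le_pow_left hq _
    _ ≤ (q^(q^n))^n := Nat.le_self_pow (by omega) _

/-! ### the main theorem -/

/-- Fix `q ≥ 2` and `A` with `|A| = q`, and write `Q = q^(q^n)`. For every `ε > 0`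
there is `N` such that for all `n ≥ N` there is a complete `n`-universal transformation
of size `2n + 2Q^n` whose maximal sequential time is at most `(n + 3 + ε)·Q^n`. -/
theorem complete_universal_elementary (q : ℕ) (hq : 2 ≤ q)
    (A : Type*) [Fintype A] (hA : Fintype.card A = q) (ε : ℝ) (hε : 0 < ε) :
    ∃ N : ℕ, ∀ n : ℕ, N ≤ n →
      ∃ f : (Fin (2 * n + 2 * (q ^ q ^ n) ^ n) → A) →
            Fin (2 * n + 2 * (q ^ q ^ n) ^ n) → A,
        -- f is complete n-universal
        (∀ gs : List ((Fin n → A) → Fin n → A),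
          ∃ hs, SeqWitness (aux_le n (2 * (q ^ q ^ n) ^ n)) f gs hs) ∧
        -- every sequence listing all transformations of A^n exactly once can be
        -- simulated using at most (n + 3 + ε)·Q^n instructions
        (∀ gs : List ((Fin n → A) → Fin n → A), gs.Nodup → (∀ g, g ∈ gs) →
          ∃ hs, SeqWitness (aux_le n (2 * (q ^ q ^ n) ^ n)) f gs hs ∧
            (hs.flatten.length : ℝ) ≤
              ((n : ℝ) + 3 + ε) * (((q ^ q ^ n) ^ n : ℕ) : ℝ)) := by
  classical
  have hA2 : 1 < Fintype.card A := by rw [hA]; omega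
  obtain ⟨b0, b1, hb⟩ := Fintype.exists_pair_of_one_lt_card hA2
  obtain ⟨k₀, hk₀⟩ := exists_nat_ge (1/ε)
  refine ⟨k₀ + 9, fun n hn => ?_⟩
  have hn1 : 1 ≤ n := by omega
  set K := (q ^ q ^ n) ^ n with hKdef
  have hK2 : 2 ≤ K := by
    have h1 : q ≤ q ^ q ^ n :=
      Nat.le_self_pow (Nat.pow_pos (n := n) (show 0 < q by omega)).ne' q
    exact le_trans (le_trans hq h1) (Nat.le_self_pow (by omega) _)
  have hcard : Fintype.card ((Fin n → A) → Fin n → A) = K := by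
    rw [Fintype.card_fun, Fintype.card_fun, Fintype.card_fin, hA, hKdef,
      ← pow_mul, ← pow_mul, Nat.mul_comm]
  let Eqv := Fintype.equivFinOfCardEq hcard
  set E : Fin K → (Fin n → A) → Fin n → A := fun t => Eqv.symm t with hE
  set idx : ((Fin n → A) → Fin n → A) → Fin K := fun g => Eqv g with hidxd
  have hidx : ∀ g, E (idx g) = g := fun g => Eqv.symm_apply_apply g
  have ha : b1 ≠ b0 := Ne.symm hb
  refine ⟨myf b0 b1 n K hK2 E, ?_, ?_⟩
  · intro gs
    exact ⟨mkHs n K hK2 idx gs,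
      mkHs_witness b0 b1 n K hK2 E idx ha hn1 (aux_le n (2*K)) hidx gs⟩
  · intro gs hnd hmem
    have huniv : gs.toFinset = Finset.univ :=
      Finset.eq_univ_iff_forall.mpr (fun g => List.mem_toFinset.mpr (hmem g))
    have hlen : gs.length = K := by
      rw [← List.toFinset_card_of_nodup hnd, huniv, Finset.card_univ, hcard]
    refine ⟨mkHs n K hK2 idx gs,
      mkHs_witness b0 b1 n K hK2 E idx ha hn1 (aux_le n (2*K)) hidx gs, ?_⟩
    have hb1 : (mkHs n K hK2 idx gs).flatten.length ≤ K * (n+2) + (K + 2*n + 10) := by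
      have h := mkHs_flatten_le n K hK2 idx gs
      rw [hlen] at h
      omega
    have hnum : (2*n + 10) * k₀ ≤ K := numeric_aux q k₀ n hq (by omega)
    have hk0pos : (1:ℝ) ≤ ε * k₀ := by
      rw [div_le_iff₀ hε] at hk₀
      linarith
    have h2 : (2*(n:ℝ) + 10) * (k₀:ℝ) ≤ (K:ℝ) := by exact_mod_cast hnum
    have hεK : (2*(n:ℝ) + 10) ≤ ε * K := by
      nlinarith [mul_le_mul_of_nonneg_left h2 hε.le, hk0pos,
        mul_le_mul_of_nonneg_left hk0pos (show (0:ℝ) ≤ 2*(n:ℝ)+10 by positivity)]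
    have hcast : ((mkHs n K hK2 idx gs).flatten.length : ℝ)
        ≤ (K:ℝ) * ((n:ℝ)+2) + ((K:ℝ) + 2*(n:ℝ) + 10) := by
      have : ((mkHs n K hK2 idx gs).flatten.length : ℝ)
          ≤ ((K * (n+2) + (K + 2*n + 10) : ℕ) : ℝ) := by exact_mod_cast hb1
      push_cast at this
      linarith
    calc ((mkHs n K hK2 idx gs).flatten.length : ℝ)
        ≤ (K:ℝ) * ((n:ℝ)+2) + ((K:ℝ) + 2*(n:ℝ) + 10) := hcast
      _ ≤ ((n:ℝ) + 3 + ε) * (K:ℝ) := by nlinarith [hεK]
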